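/- Let A₁ ∈ ℝ^{n₁×n₁} and A₂ ∈ ℝ^{n₂×n₂} be Hurwitz, C₁ ∈ ℝ^{p×n₁}, C₂ ∈ ℝ^{p×n₂}, K₁ ∈ ℝ^{n₂×n₁}, K₂ ∈ ℝ^{n₁×n₂}. Then all the level-k observability Gramians Q₁^{(k)}, Q₂^{(k)} exist (the iterated integrals converge) and for every k ≥ 2 they satisfy the coupled Lyapunov recursions A₁ᵀ Q₁^{(k)} + Q₁^{(k)} A₁ + K₁ᵀ Q₂^{(k−1)} K₁ = 0 and A₂ᵀ Q₂^{(k)} + Q₂^{(k)} A₂ + K₂ᵀ Q₁^{(k−1)} K₂ = 0. -/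

import Mathlib

open Matrix MeasureTheory

/-- A real square matrix is Hurwitz if all eigenvalues (over `ℂ`) have negative real part. -/
def IsHurwitz {n : ℕ} (A : Matrix (Fin n) (Fin n) ℝ) : Prop :=
  ∀ μ ∈ spectrum ℂ (A.map (algebraMap ℝ ℂ)), μ.re < 0

/-- The pair of level-`(k+1)` observability energy functionals for the two-mode switched
system: the first component is the functional for the alternating mode sequence *ending*
in mode 1, the second for the one ending in mode 2.  Here `K1 : ℝ^{n₂×n₁}` couples mode 1
to mode 2 and `K2 : ℝ^{n₁×n₂}` couples mode 2 to mode 1, and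
`g^o(t_k,…,t₁) = C_{q_k} e^{A_{q_k}t_k} K_{q_k←q_{k−1}} ⋯ K_{q₂←q₁} e^{A_{q₁}t₁}`;
the argument `t 0` is the *last* time variable `t₁`. -/
noncomputable def obsFun {n1 n2 p : ℕ}
    (A1 : Matrix (Fin n1) (Fin n1) ℝ) (A2 : Matrix (Fin n2) (Fin n2) ℝ)
    (C1 : Matrix (Fin p) (Fin n1) ℝ) (C2 : Matrix (Fin p) (Fin n2) ℝ)
    (K1 : Matrix (Fin n2) (Fin n1) ℝ) (K2 : Matrix (Fin n1) (Fin n2) ℝ) :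
    (k : ℕ) → ((Fin (k + 1) → ℝ) → Matrix (Fin p) (Fin n1) ℝ) ×
      ((Fin (k + 1) → ℝ) → Matrix (Fin p) (Fin n2) ℝ)
  | 0 => (fun t => C1 * NormedSpace.exp (t 0 • A1),
          fun t => C2 * NormedSpace.exp (t 0 • A2))
  | k + 1 =>
      (fun t => (obsFun A1 A2 C1 C2 K1 K2 k).2 (fun i => t i.succ) * K1 *
        NormedSpace.exp (t 0 • A1),
       fun t => (obsFun A1 A2 C1 C2 K1 K2 k).1 (fun i => t i.succ) * K2 *
        NormedSpace.exp (t 0 • A2))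

/-- The level-`(k+1)` observability Gramian of mode 1, defined entrywise as the iterated
integral of `(g^o)ᵀ g^o` over `[0,∞)^{k+1}`. -/
noncomputable def obsGram1 {n1 n2 p : ℕ}
    (A1 : Matrix (Fin n1) (Fin n1) ℝ) (A2 : Matrix (Fin n2) (Fin n2) ℝ)
    (C1 : Matrix (Fin p) (Fin n1) ℝ) (C2 : Matrix (Fin p) (Fin n2) ℝ)
    (K1 : Matrix (Fin n2) (Fin n1) ℝ) (K2 : Matrix (Fin n1) (Fin n2) ℝ) (k : ℕ) :
    Matrix (Fin n1) (Fin n1) ℝ :=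
  Matrix.of fun i j =>
    ∫ t in Set.univ.pi (fun _ : Fin (k + 1) => Set.Ioi (0:ℝ)),
      (((obsFun A1 A2 C1 C2 K1 K2 k).1 t)ᵀ * (obsFun A1 A2 C1 C2 K1 K2 k).1 t) i j

/-- The level-`(k+1)` observability Gramian of mode 2. -/
noncomputable def obsGram2 {n1 n2 p : ℕ}
    (A1 : Matrix (Fin n1) (Fin n1) ℝ) (A2 : Matrix (Fin n2) (Fin n2) ℝ)
    (C1 : Matrix (Fin p) (Fin n1) ℝ) (C2 : Matrix (Fin p) (Fin n2) ℝ)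
    (K1 : Matrix (Fin n2) (Fin n1) ℝ) (K2 : Matrix (Fin n1) (Fin n2) ℝ) (k : ℕ) :
    Matrix (Fin n2) (Fin n2) ℝ :=
  Matrix.of fun i j =>
    ∫ t in Set.univ.pi (fun _ : Fin (k + 1) => Set.Ioi (0:ℝ)),
      (((obsFun A1 A2 C1 C2 K1 K2 k).2 t)ᵀ * (obsFun A1 A2 C1 C2 K1 K2 k).2 t) i j

/-!
Hurwitz stability makes `exp (t • A)` decay exponentially: every eigenvalue of `exp A` is `exp μ`
for an eigenvalue `μ` of `A` (`A` has an eigenvector inside each eigenspace of `exp A`), so the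
spectral radius of `exp A` is `< 1` and Gelfand's formula bounds `‖(exp A) ^ m‖` geometrically.
Hence `P t = (exp (t • A))ᵀ * M * exp (t • A)` is integrable on `(0, ∞)` and tends to `0`, and
integrating `P' = Aᵀ * P + P * A` gives `Aᵀ * L + L * A + M = 0` for `L = ∫₀^∞ P`.
At the next level, the integrand of one mode is `(K * exp (t₁ • A))ᵀ * G * (K * exp (t₁ • A))`,
where `G` is the previous-level integrand of the other mode in the remaining time variables, so by
Fubini the Gramian is `L` for `M = Kᵀ * Q * K`, `Q` the previous-level Gramian of the other mode.
-/

open Filter Asymptotics Topology Set NNReal NormedSpace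

section OperatorNorm

open scoped Matrix.Norms.Operator

namespace Matrix

variable {n : Type*} [Fintype n] [DecidableEq n]

theorem exp_mulVec_of_mulVec_eq_smul {𝕜 : Type*} [RCLike 𝕜] {A : Matrix n n 𝕜} {v : n → 𝕜}
    {μ : 𝕜} (h : A *ᵥ v = μ • v) : exp A *ᵥ v = exp μ • v := by
  have hpow (m : ℕ) : A ^ m *ᵥ v = μ ^ m • v := by
    induction m with
    | zero => simp
    | succ m ih => rw [pow_succ', ← mulVec_mulVec, ih, mulVec_smul, h, smul_smul, ← pow_succ]
  let L : Matrix n n 𝕜 →L[𝕜] n → 𝕜 :=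
    LinearMap.toContinuousLinearMap ((mulVecBilin 𝕜 𝕜).flip v)
  have hA := (exp_series_hasSum_exp' (𝕂 := 𝕜) A).mapL L
  have hμ := (exp_series_hasSum_exp' (𝕂 := 𝕜) μ).smul_const v
  simp only [L, LinearMap.coe_toContinuousLinearMap', LinearMap.flip_apply, mulVecBilin_apply,
    smul_mulVec, hpow, smul_smul] at hA
  simp only [smul_eq_mul] at hμ
  exact hA.unique hμ

theorem spectrum_exp_subset (A : Matrix n n ℂ) :
    spectrum ℂ (exp A) ⊆ Complex.exp '' spectrum ℂ A := by
  intro l hl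
  rw [← spectrum_toLin', ← Module.End.hasEigenvalue_iff_mem_spectrum,
    Module.End.hasEigenvalue_iff, ← Submodule.nontrivial_iff_ne_bot] at hl
  have hcomm : Commute (toLin' (exp A)) (toLin' A) :=
    ((Commute.refl A).exp_left).map Matrix.toLinAlgEquiv'
  have hmaps := Module.End.mapsTo_genEigenspace_of_comm hcomm l 1
  obtain ⟨μ, hμ⟩ := Module.End.exists_eigenvalue ((toLin' A).restrict hmaps)
  obtain ⟨w, hw⟩ := hμ.exists_hasEigenvector
  have hw0 : (w : n → ℂ) ≠ 0 := by simpa using hw.2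
  have hAw : A *ᵥ w = μ • w := congrArg Subtype.val hw.apply_eq_smul
  have hexpw : exp A *ᵥ w = l • w := by
    simpa using Module.End.mem_eigenspace_iff.mp w.2
  refine ⟨μ, ?_, ?_⟩
  · rw [← spectrum_toLin', ← Module.End.hasEigenvalue_iff_mem_spectrum]
    exact Module.End.hasEigenvalue_of_hasEigenvector ⟨by simpa using hAw, hw0⟩
  · have := (exp_mulVec_of_mulVec_eq_smul hAw).symm.trans hexpw
    rw [← Complex.exp_eq_exp_ℂ] at this
    exact smul_left_injective ℂ hw0 this

end Matrix

theorem spectrum.eventually_norm_pow_le {A : Type*} [NormedRing A] [NormedAlgebra ℂ A]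
    [CompleteSpace A] {a : A} {r : ℝ≥0} (h : spectralRadius ℂ a < r) :
    ∀ᶠ m : ℕ in atTop, ‖a ^ m‖ ≤ r ^ m := by
  filter_upwards [(pow_norm_pow_one_div_tendsto_nhds_spectralRadius a).eventually_lt_const h,
    eventually_ge_atTop 1] with m hm hm1
  rw [ENNReal.ofReal_lt_coe_iff (by positivity), one_div] at hm
  exact_mod_cast ((Real.rpow_inv_lt_iff_of_pos (norm_nonneg _) r.2
    (by positivity : (0 : ℝ) < m)).mp hm).le

theorem isBigO_exp_smul_rpow {𝔸 : Type*} [NormedRing 𝔸] [NormedAlgebra ℝ 𝔸] [CompleteSpace 𝔸]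
    {a : 𝔸} {r : ℝ} (hr0 : 0 < r) (hr1 : r ≤ 1)
    (h : ∀ᶠ m : ℕ in atTop, ‖exp a ^ m‖ ≤ r ^ m) :
    (fun t : ℝ => exp (t • a)) =O[atTop] fun t => r ^ t := by
  let _ : NormedAlgebra ℚ 𝔸 := .restrictScalars ℚ ℝ 𝔸
  obtain ⟨K, hK⟩ := (isCompact_Icc (a := (0 : ℝ)) (b := 1)).exists_bound_of_continuousOn
    (f := fun s : ℝ => exp (s • a))
    (exp_continuous.comp (continuous_id.smul continuous_const)).continuousOn
  refine IsBigO.of_bound (K * r⁻¹) ?_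
  filter_upwards [tendsto_nat_floor_atTop.eventually h, eventually_ge_atTop 0] with t hpow ht
  set m := ⌊t⌋₊
  have hsplit : exp (t • a) = exp ((t - m) • a) * exp a ^ m := by
    rw [← NormedSpace.exp_nsmul, ← Nat.cast_smul_eq_nsmul ℝ,
      ← NormedSpace.exp_add_of_commute (((Commute.refl a).smul_left _).smul_right _),
      ← add_smul, sub_add_cancel]
  have hs : t - m ∈ Icc (0 : ℝ) 1 :=
    ⟨sub_nonneg.2 (Nat.floor_le ht), by linarith [Nat.lt_floor_add_one t]⟩
  have hK0 : 0 ≤ K := (norm_nonneg _).trans (hK _ hs)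
  have hrm : r ^ m ≤ r⁻¹ * r ^ t := by
    rw [← Real.rpow_natCast, ← Real.rpow_neg_one, ← Real.rpow_add hr0]
    exact Real.rpow_le_rpow_of_exponent_ge hr0 hr1 (by linarith [Nat.lt_floor_add_one t])
  calc ‖exp (t • a)‖ ≤ K * r ^ m := by
        rw [hsplit]
        exact (norm_mul_le _ _).trans (mul_le_mul (hK _ hs) hpow (norm_nonneg _) hK0)
    _ ≤ K * (r⁻¹ * r ^ t) := by gcongr
    _ = K * r⁻¹ * ‖r ^ t‖ := by rw [Real.norm_of_nonneg (by positivity)]; ring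

namespace Matrix

variable {m n : Type*} [Fintype m] [Fintype n]

theorem linfty_opNorm_map_ofReal (M : Matrix m n ℝ) : ‖M.map (algebraMap ℝ ℂ)‖ = ‖M‖ := by
  simp [linfty_opNorm_def]

theorem norm_entry_le_linfty_opNorm {α : Type*} [SeminormedAddCommGroup α] (M : Matrix m n α)
    (i : m) (j : n) : ‖M i j‖ ≤ ‖M‖ := by
  rw [linfty_opNorm_def]
  exact_mod_cast (Finset.single_le_sum (fun j _ => zero_le) (Finset.mem_univ j)).trans
    (Finset.le_sup (f := fun i => ∑ j, ‖M i j‖₊) (Finset.mem_univ i))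

theorem exp_map_ofReal [DecidableEq n] (M : Matrix n n ℝ) :
    exp (M.map (algebraMap ℝ ℂ)) = (exp M).map (algebraMap ℝ ℂ) :=
  (map_exp (algebraMap ℝ ℂ).mapMatrix (continuous_id.matrix_map Complex.continuous_ofReal) M).symm

theorem hasDerivAt_exp_smul_apply [DecidableEq n] (A : Matrix n n ℝ) (t : ℝ) (i j : n) :
    HasDerivAt (fun t : ℝ => exp (t • A) i j) ((exp (t • A) * A) i j) t :=
  (entryLinearMap ℝ ℝ i j).toContinuousLinearMap.hasFDerivAt.comp_hasDerivAt t
    (hasDerivAt_exp_smul_const A t)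

end Matrix

namespace IsHurwitz

variable {n : ℕ} {A : Matrix (Fin n) (Fin n) ℝ}

theorem spectralRadius_exp_lt_one (hA : IsHurwitz A) :
    spectralRadius ℂ (exp (A.map (algebraMap ℝ ℂ))) < 1 := by
  rcases (spectrum ℂ (exp (A.map (algebraMap ℝ ℂ)))).eq_empty_or_nonempty with h | h
  · simp only [spectralRadius, h]
    simp
  · refine spectrum.spectralRadius_lt_of_forall_lt_of_nonempty h fun z hz => ?_
    obtain ⟨μ, hμ, rfl⟩ := Matrix.spectrum_exp_subset _ hz
    rw [← NNReal.coe_lt_coe, coe_nnnorm, Complex.norm_exp]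
    simpa using hA μ hμ

theorem exists_isBigO_exp_smul (hA : IsHurwitz A) :
    ∃ ε > 0, (fun t : ℝ => exp (t • A)) =O[atTop] fun t => Real.exp (-ε * t) := by
  obtain ⟨r, hρr, hr⟩ := ENNReal.lt_iff_exists_nnreal_btwn.mp hA.spectralRadius_exp_lt_one
  have hr0 : 0 < (r : ℝ) := by exact_mod_cast ENNReal.coe_pos.mp (zero_le.trans_lt hρr)
  have hr1 : (r : ℝ) < 1 := by exact_mod_cast hr
  have hpow : ∀ᶠ m : ℕ in atTop, ‖exp A ^ m‖ ≤ (r : ℝ) ^ m := by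
    filter_upwards [spectrum.eventually_norm_pow_le hρr] with m hm
    rwa [exp_map_ofReal, ← Matrix.map_pow, linfty_opNorm_map_ofReal] at hm
  refine ⟨-Real.log r, neg_pos.2 (Real.log_neg hr0 hr1), ?_⟩
  simp only [neg_neg]
  exact (isBigO_exp_smul_rpow hr0 hr1.le hpow).congr_right fun t => Real.rpow_def_of_pos hr0 t

theorem exists_isBigO_exp_smul_apply (hA : IsHurwitz A) :
    ∃ ε > 0, ∀ i j, (fun t : ℝ => exp (t • A) i j) =O[atTop] fun t => Real.exp (-ε * t) := by
  obtain ⟨ε, hε, hO⟩ := hA.exists_isBigO_exp_smul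
  exact ⟨ε, hε, fun i j =>
    (isBigO_of_le _ fun t => norm_entry_le_linfty_opNorm (exp (t • A)) i j).trans hO⟩

end IsHurwitz

end OperatorNorm

namespace Matrix

theorem transpose_mul_mul_apply {R : Type*} [CommSemiring R] {m n n' : Type*} [Fintype m]
    (X : Matrix m n R) (M : Matrix m m R) (Y : Matrix m n' R) (i : n) (j : n') :
    (Xᵀ * M * Y) i j = ∑ a, ∑ b, M a b * (X a i * Y b j) := by
  simp only [mul_apply, transpose_apply, Finset.sum_mul]
  rw [Finset.sum_comm]
  exact Finset.sum_congr rfl fun _ _ => Finset.sum_congr rfl fun _ _ => by ring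

variable {X : Type*} [MeasurableSpace X] {μ : Measure X} {l m n : Type*} [Fintype m]

theorem integrable_mul_apply (B : Matrix l m ℝ) {f : X → Matrix m n ℝ}
    (hf : ∀ i j, Integrable (fun x => f x i j) μ) (i : l) (j : n) :
    Integrable (fun x => (B * f x) i j) μ := by
  simp only [mul_apply]
  exact integrable_finsetSum _ fun k _ => (hf k j).const_mul _

theorem integrable_apply_mul {f : X → Matrix l m ℝ} (B : Matrix m n ℝ)
    (hf : ∀ i j, Integrable (fun x => f x i j) μ) (i : l) (j : n) :
    Integrable (fun x => (f x * B) i j) μ := by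
  simp only [mul_apply]
  exact integrable_finsetSum _ fun k _ => (hf i k).mul_const _

theorem mul_of_integral (B : Matrix l m ℝ) {f : X → Matrix m n ℝ}
    (hf : ∀ i j, Integrable (fun x => f x i j) μ) :
    B * (of fun i j => ∫ x, f x i j ∂μ) = of fun i j => ∫ x, (B * f x) i j ∂μ := by
  ext i j
  simp only [mul_apply, of_apply]
  rw [integral_finsetSum _ fun k _ => (hf k j).const_mul _]
  simp only [integral_const_mul]

theorem of_integral_mul {f : X → Matrix l m ℝ} (B : Matrix m n ℝ)
    (hf : ∀ i j, Integrable (fun x => f x i j) μ) :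
    (of fun i j => ∫ x, f x i j ∂μ) * B = of fun i j => ∫ x, (f x * B) i j ∂μ := by
  ext i j
  simp only [mul_apply, of_apply]
  rw [integral_finsetSum _ fun k _ => (hf i k).mul_const _]
  simp only [integral_mul_const]

end Matrix

section Lyapunov

variable {n : ℕ}

noncomputable def lyapunovGramian (A M : Matrix (Fin n) (Fin n) ℝ) : Matrix (Fin n) (Fin n) ℝ :=
  of fun i j => ∫ t in Ioi (0 : ℝ), ((exp (t • A))ᵀ * M * exp (t • A)) i j

theorem hasDerivAt_lyapunov_apply (A M : Matrix (Fin n) (Fin n) ℝ) (t : ℝ) (i j : Fin n) :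
    HasDerivAt (fun t : ℝ => ((exp (t • A))ᵀ * M * exp (t • A)) i j)
      ((Aᵀ * ((exp (t • A))ᵀ * M * exp (t • A)) + (exp (t • A))ᵀ * M * exp (t • A) * A) i j)
      t := by
  have hd (a b : Fin n) := ((hasDerivAt_exp_smul_apply A t a i).mul
    (hasDerivAt_exp_smul_apply A t b j)).const_mul (M a b)
  simp_rw [transpose_mul_mul_apply]
  refine (HasDerivAt.fun_sum fun a _ => HasDerivAt.fun_sum fun b _ => hd a b).congr_deriv ?_
  rw [show Aᵀ * ((exp (t • A))ᵀ * M * exp (t • A)) + (exp (t • A))ᵀ * M * exp (t • A) * A =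
      (exp (t • A) * A)ᵀ * M * exp (t • A) + (exp (t • A))ᵀ * M * (exp (t • A) * A) by
    simp [transpose_mul, Matrix.mul_assoc]]
  simp only [Matrix.add_apply, transpose_mul_mul_apply, ← Finset.sum_add_distrib, mul_add]

namespace IsHurwitz

variable {A : Matrix (Fin n) (Fin n) ℝ}

theorem exists_isBigO_lyapunov_apply (hA : IsHurwitz A) (M : Matrix (Fin n) (Fin n) ℝ) :
    ∃ ε > 0, ∀ i j, (fun t : ℝ => ((exp (t • A))ᵀ * M * exp (t • A)) i j) =O[atTop]
      fun t => Real.exp (-ε * t) := by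
  obtain ⟨ε, hε, hO⟩ := hA.exists_isBigO_exp_smul_apply
  refine ⟨2 * ε, by positivity, fun i j => ?_⟩
  simp_rw [transpose_mul_mul_apply]
  refine IsBigO.fun_sum fun a _ => IsBigO.fun_sum fun b _ => ?_
  refine (((hO a i).mul (hO b j)).const_mul_left (M a b)).congr_right fun t => ?_
  rw [← Real.exp_add]
  ring_nf

theorem integrableOn_lyapunov_apply (hA : IsHurwitz A) (M : Matrix (Fin n) (Fin n) ℝ)
    (i j : Fin n) :
    IntegrableOn (fun t : ℝ => ((exp (t • A))ᵀ * M * exp (t • A)) i j) (Ioi 0) := by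
  obtain ⟨ε, hε, hO⟩ := hA.exists_isBigO_lyapunov_apply M
  exact integrable_of_isBigO_exp_neg hε
    (fun t _ => (hasDerivAt_lyapunov_apply A M t i j).continuousAt.continuousWithinAt) (hO i j)

theorem tendsto_lyapunov_apply (hA : IsHurwitz A) (M : Matrix (Fin n) (Fin n) ℝ)
    (i j : Fin n) :
    Tendsto (fun t : ℝ => ((exp (t • A))ᵀ * M * exp (t • A)) i j) atTop (𝓝 0) := by
  obtain ⟨ε, hε, hO⟩ := hA.exists_isBigO_lyapunov_apply M
  exact (hO i j).trans_tendsto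
    (Real.tendsto_exp_atBot.comp (tendsto_id.const_mul_atTop_of_neg (neg_neg_iff_pos.2 hε)))

theorem lyapunov_eq (hA : IsHurwitz A) (M : Matrix (Fin n) (Fin n) ℝ) :
    Aᵀ * lyapunovGramian A M + lyapunovGramian A M * A + M = 0 := by
  have hF := hA.integrableOn_lyapunov_apply M
  have hAF := integrable_mul_apply Aᵀ hF
  have hFA := integrable_apply_mul A hF
  rw [lyapunovGramian, mul_of_integral _ hF, of_integral_mul _ hF]
  ext i j
  have hFTC := integral_Ioi_of_hasDerivAt_of_tendsto'
    (fun t _ => hasDerivAt_lyapunov_apply A M t i j) ((hAF i j).add (hFA i j))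
    (hA.tendsto_lyapunov_apply M i j)
  simp only [Matrix.add_apply] at hFTC
  rw [integral_add (hAF i j) (hFA i j)] at hFTC
  simp only [Matrix.add_apply, of_apply, hFTC, zero_smul, exp_zero, transpose_one, Matrix.one_mul,
    Matrix.mul_one, Matrix.zero_apply]
  ring

theorem integrableOn_mul_exp_smul_apply_mul {m : ℕ} (hA : IsHurwitz A)
    (K : Matrix (Fin m) (Fin n) ℝ) (a b : Fin m) (i j : Fin n) :
    IntegrableOn (fun s : ℝ => (K * exp (s • A)) a i * (K * exp (s • A)) b j) (Ioi 0) := by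
  convert hA.integrableOn_lyapunov_apply (Kᵀ * single a b (1 : ℝ) * K) i j using 2 with s
  rw [show (exp (s • A))ᵀ * (Kᵀ * single a b (1 : ℝ) * K) * exp (s • A) =
      (K * exp (s • A))ᵀ * single a b (1 : ℝ) * (K * exp (s • A)) by
    simp [transpose_mul, Matrix.mul_assoc], transpose_mul_mul_apply]
  simp [single_apply, ite_and]

end IsHurwitz

end Lyapunov

section Orthant

variable {α : Type*} [MeasurableSpace α] {μ : Measure α} {k : ℕ}

theorem volume_restrict_univ_pi {β ι : Type*} [MeasureSpace β]
    [SigmaFinite (volume : Measure β)] [Fintype ι] (s : Set β) :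
    (volume : Measure (ι → β)).restrict (univ.pi fun _ => s) =
      Measure.pi fun _ => volume.restrict s := by
  rw [volume_pi, Measure.restrict_pi_pi]

theorem integrable_comp_apply_zero_iff {E : Type*} [NormedAddCommGroup E] {f : α → E} :
    Integrable (fun t : Fin 1 → α => f (t 0)) (Measure.pi fun _ => μ) ↔ Integrable f μ :=
  (measurePreserving_funUnique μ (Fin 1)).integrable_comp_emb
    (MeasurableEquiv.funUnique (Fin 1) α).measurableEmbedding

variable [SigmaFinite μ]

theorem integrable_tail_mul_head {f : α → ℝ} {g : (Fin k → α) → ℝ} (hf : Integrable f μ)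
    (hg : Integrable g (Measure.pi fun _ => μ)) :
    Integrable (fun t : Fin (k + 1) → α => g (Fin.tail t) * f (t 0))
      (Measure.pi fun _ => μ) := by
  have := (measurePreserving_piFinSuccAbove (fun _ : Fin (k + 1) => μ) 0).integrable_comp_emb
    (MeasurableEquiv.measurableEmbedding _) |>.mpr (hf.mul_prod hg)
  convert this using 2 with t
  simp [mul_comm]

theorem integral_tail_mul_head (f : α → ℝ) (g : (Fin k → α) → ℝ) :
    ∫ t : Fin (k + 1) → α, g (Fin.tail t) * f (t 0) ∂(Measure.pi fun _ => μ) =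
      (∫ u, g u ∂(Measure.pi fun _ => μ)) * ∫ s, f s ∂μ := by
  have h := (measurePreserving_piFinSuccAbove (fun _ : Fin (k + 1) => μ) 0).integral_comp'
    (fun q => f q.1 * g q.2)
  rw [integral_prod_mul, mul_comm] at h
  rw [← h]
  simp [mul_comm]

variable {m n : Type*} [Fintype m] (X : α → Matrix m n ℝ) (G : (Fin k → α) → Matrix m m ℝ)

theorem integrable_transpose_mul_mul_apply
    (hX : ∀ a b i j, Integrable (fun s => X s a i * X s b j) μ)
    (hG : ∀ a b, Integrable (fun u => G u a b) (Measure.pi fun _ => μ)) (i j : n) :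
    Integrable (fun t : Fin (k + 1) → α => ((X (t 0))ᵀ * G (Fin.tail t) * X (t 0)) i j)
      (Measure.pi fun _ => μ) := by
  simp_rw [transpose_mul_mul_apply]
  exact integrable_finsetSum _ fun a _ => integrable_finsetSum _ fun b _ =>
    integrable_tail_mul_head (hX a b i j) (hG a b)

theorem integral_transpose_mul_mul_apply
    (hX : ∀ a b i j, Integrable (fun s => X s a i * X s b j) μ)
    (hG : ∀ a b, Integrable (fun u => G u a b) (Measure.pi fun _ => μ)) (i j : n) :
    ∫ t : Fin (k + 1) → α, ((X (t 0))ᵀ * G (Fin.tail t) * X (t 0)) i j ∂(Measure.pi fun _ => μ) =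
      ∫ s, ((X s)ᵀ * (of fun a b => ∫ u, G u a b ∂(Measure.pi fun _ => μ)) * X s) i j ∂μ := by
  simp_rw [transpose_mul_mul_apply, of_apply]
  rw [integral_finsetSum _ fun a _ => integrable_finsetSum _ fun b _ =>
      integrable_tail_mul_head (hX a b i j) (hG a b),
    integral_finsetSum _ fun a _ => integrable_finsetSum _ fun b _ =>
      (hX a b i j).const_mul _]
  refine Finset.sum_congr rfl fun a _ => ?_
  rw [integral_finsetSum _ fun b _ => integrable_tail_mul_head (hX a b i j) (hG a b),
    integral_finsetSum _ fun b _ => (hX a b i j).const_mul _]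
  refine Finset.sum_congr rfl fun b _ => ?_
  exact (integral_tail_mul_head (fun s => X s a i * X s b j) (fun u => G u a b)).trans
    (integral_const_mul _ _).symm

end Orthant

section ObservabilityGramians

variable {n1 n2 p : ℕ} (A1 : Matrix (Fin n1) (Fin n1) ℝ) (A2 : Matrix (Fin n2) (Fin n2) ℝ)
  (C1 : Matrix (Fin p) (Fin n1) ℝ) (C2 : Matrix (Fin p) (Fin n2) ℝ)
  (K1 : Matrix (Fin n2) (Fin n1) ℝ) (K2 : Matrix (Fin n1) (Fin n2) ℝ)

theorem obsFun_snd_eq_fst (k : ℕ) :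
    (obsFun A1 A2 C1 C2 K1 K2 k).2 = (obsFun A2 A1 C2 C1 K2 K1 k).1 := by
  induction k generalizing n1 n2 with
  | zero => rfl
  | succ k ih => simp only [obsFun, ih]

theorem obsGram2_eq_obsGram1 (k : ℕ) :
    obsGram2 A1 A2 C1 C2 K1 K2 k = obsGram1 A2 A1 C2 C1 K2 K1 k := by
  rw [obsGram1, obsGram2, obsFun_snd_eq_fst]

theorem transpose_mul_obsFun_fst_zero (t : Fin 1 → ℝ) :
    ((obsFun A1 A2 C1 C2 K1 K2 0).1 t)ᵀ * (obsFun A1 A2 C1 C2 K1 K2 0).1 t =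
      (exp (t 0 • A1))ᵀ * (C1ᵀ * C1) * exp (t 0 • A1) := by
  simp [obsFun, transpose_mul, Matrix.mul_assoc]

theorem transpose_mul_obsFun_fst_succ (k : ℕ) (t : Fin (k + 2) → ℝ) :
    ((obsFun A1 A2 C1 C2 K1 K2 (k + 1)).1 t)ᵀ * (obsFun A1 A2 C1 C2 K1 K2 (k + 1)).1 t =
      (K1 * exp (t 0 • A1))ᵀ * (((obsFun A1 A2 C1 C2 K1 K2 k).2 (Fin.tail t))ᵀ *
        (obsFun A1 A2 C1 C2 K1 K2 k).2 (Fin.tail t)) * (K1 * exp (t 0 • A1)) := by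
  simp only [obsFun, transpose_mul, Matrix.mul_assoc]
  rfl

variable {A1 A2}

theorem integrable_obsFun_fst (hA1 : IsHurwitz A1) (hA2 : IsHurwitz A2) (k : ℕ) (i j : Fin n1) :
    Integrable (fun t => (((obsFun A1 A2 C1 C2 K1 K2 k).1 t)ᵀ *
        (obsFun A1 A2 C1 C2 K1 K2 k).1 t) i j)
      (Measure.pi fun _ => volume.restrict (Ioi (0 : ℝ))) := by
  induction k generalizing n1 n2 with
  | zero =>
    simp_rw [transpose_mul_obsFun_fst_zero]
    exact integrable_comp_apply_zero_iff.2 (hA1.integrableOn_lyapunov_apply (C1ᵀ * C1) i j)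
  | succ k ih =>
    have hG := obsFun_snd_eq_fst A1 A2 C1 C2 K1 K2 k ▸ ih C2 C1 K2 K1 hA2 hA1
    simp_rw [transpose_mul_obsFun_fst_succ]
    exact integrable_transpose_mul_mul_apply (fun s => K1 * exp (s • A1)) _
      (hA1.integrableOn_mul_exp_smul_apply_mul K1) hG i j

theorem integrable_obsFun_snd (hA1 : IsHurwitz A1) (hA2 : IsHurwitz A2) (k : ℕ) (i j : Fin n2) :
    Integrable (fun t => (((obsFun A1 A2 C1 C2 K1 K2 k).2 t)ᵀ *
        (obsFun A1 A2 C1 C2 K1 K2 k).2 t) i j)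
      (Measure.pi fun _ => volume.restrict (Ioi (0 : ℝ))) := by
  rw [obsFun_snd_eq_fst]
  exact integrable_obsFun_fst C2 C1 K2 K1 hA2 hA1 k i j

theorem obsGram1_succ (hA1 : IsHurwitz A1) (hA2 : IsHurwitz A2) (k : ℕ) :
    obsGram1 A1 A2 C1 C2 K1 K2 (k + 1) =
      lyapunovGramian A1 (K1ᵀ * obsGram2 A1 A2 C1 C2 K1 K2 k * K1) := by
  ext i j
  simp only [obsGram1, obsGram2, lyapunovGramian, of_apply, volume_restrict_univ_pi,
    transpose_mul_obsFun_fst_succ]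
  rw [integral_transpose_mul_mul_apply (fun s => K1 * exp (s • A1)) _
    (hA1.integrableOn_mul_exp_smul_apply_mul K1) (integrable_obsFun_snd C1 C2 K1 K2 hA1 hA2 k)]
  simp only [transpose_mul, Matrix.mul_assoc]

end ObservabilityGramians

theorem stmt_1 {n1 n2 p : ℕ}
    (A1 : Matrix (Fin n1) (Fin n1) ℝ) (A2 : Matrix (Fin n2) (Fin n2) ℝ)
    (C1 : Matrix (Fin p) (Fin n1) ℝ) (C2 : Matrix (Fin p) (Fin n2) ℝ)
    (K1 : Matrix (Fin n2) (Fin n1) ℝ) (K2 : Matrix (Fin n1) (Fin n2) ℝ)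
    (hA1 : IsHurwitz A1) (hA2 : IsHurwitz A2) :
    (∀ k : ℕ, ∀ i j,
        IntegrableOn
          (fun t => (((obsFun A1 A2 C1 C2 K1 K2 k).1 t)ᵀ *
              (obsFun A1 A2 C1 C2 K1 K2 k).1 t) i j)
          (Set.univ.pi (fun _ : Fin (k + 1) => Set.Ioi (0:ℝ)))) ∧
    (∀ k : ℕ, ∀ i j,
        IntegrableOn
          (fun t => (((obsFun A1 A2 C1 C2 K1 K2 k).2 t)ᵀ *
              (obsFun A1 A2 C1 C2 K1 K2 k).2 t) i j)
          (Set.univ.pi (fun _ : Fin (k + 1) => Set.Ioi (0:ℝ)))) ∧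
    (∀ k : ℕ,
        A1ᵀ * obsGram1 A1 A2 C1 C2 K1 K2 (k + 1) +
            obsGram1 A1 A2 C1 C2 K1 K2 (k + 1) * A1 +
            K1ᵀ * obsGram2 A1 A2 C1 C2 K1 K2 k * K1 = 0 ∧
        A2ᵀ * obsGram2 A1 A2 C1 C2 K1 K2 (k + 1) +
            obsGram2 A1 A2 C1 C2 K1 K2 (k + 1) * A2 +
            K2ᵀ * obsGram1 A1 A2 C1 C2 K1 K2 k * K2 = 0) := by
  refine ⟨fun k i j => ?_, fun k i j => ?_, fun k => ⟨?_, ?_⟩⟩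
  · rw [IntegrableOn, volume_restrict_univ_pi]
    exact integrable_obsFun_fst C1 C2 K1 K2 hA1 hA2 k i j
  · rw [IntegrableOn, volume_restrict_univ_pi]
    exact integrable_obsFun_snd C1 C2 K1 K2 hA1 hA2 k i j
  · rw [obsGram1_succ C1 C2 K1 K2 hA1 hA2]
    exact hA1.lyapunov_eq _
  · rw [obsGram2_eq_obsGram1, obsGram1_succ C2 C1 K2 K1 hA2 hA1, obsGram2_eq_obsGram1]
    exact hA2.lyapunov_eq _
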